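/- For every type A and all functions f, g : A → 𝟛 into Kleene's three-valued chain: ⨅ x, ((U ∧ f x) ∨ g x) = (U ∧ ⨅ x, (f x ∨ g x)) ∨ (⨅ x, g x). -/

import Mathlib

/-- Kleene's strong three-valued logic: the three-element chain F < U < T. -/
inductive K3 : Type
  | F | U | T
deriving DecidableEq

instance K3.instFintype : Fintype K3 where
  elems := {K3.F, K3.U, K3.T}
  complete x := by cases x <;> simp

namespace K3

/-- Rank of a truth value in the chain F < U < T. -/
def toFin : K3 → Fin 3
  | F => 0
  | U => 1
  | T => 2

instance : LinearOrder K3 := LinearOrder.lift' toFin (by decide)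

/-- Kleene negation: swaps T and F, fixes U. -/
def neg : K3 → K3
  | F => T
  | U => U
  | T => F

/-- A truth value is well-defined if it is F or T. -/
def WellDefined (v : K3) : Prop := v = F ∨ v = T

end K3


instance : BoundedOrder K3 where
  top := K3.T
  bot := K3.F
  le_top x := by cases x <;> decide
  bot_le x := by cases x <;> decide

noncomputable instance : CompleteLinearOrder K3 :=
  Fintype.toCompleteLinearOrder K3

theorem iInf_inf_sup_eq {α ι : Type*} [Order.Coframe α] (a : α) (f g : ι → α) :
    ⨅ i, (a ⊓ f i) ⊔ g i = (a ⊓ ⨅ i, (f i ⊔ g i)) ⊔ ⨅ i, g i := by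
  have hg : ⨅ i, g i ≤ ⨅ i, (f i ⊔ g i) := iInf_mono fun i => le_sup_right
  calc ⨅ i, (a ⊓ f i) ⊔ g i
      = ⨅ i, (a ⊔ g i) ⊓ (f i ⊔ g i) := by simp_rw [sup_inf_right]
    _ = (a ⊔ ⨅ i, g i) ⊓ ⨅ i, (f i ⊔ g i) := by rw [iInf_inf_eq, sup_iInf_eq]
    _ = (a ⊓ ⨅ i, (f i ⊔ g i)) ⊔ ⨅ i, g i := by rw [inf_sup_right, inf_eq_left.mpr hg]

/-- `⨅ x, ((U ∧ f x) ∨ g x) = (U ∧ ⨅ x, (f x ∨ g x)) ∨ (⨅ x, g x)` where the universal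
quantifier is the infimum in the complete lattice 𝟛. -/
theorem kleene_forall_undef_elim {A : Type*} (f g : A → K3) :
    (⨅ x, ((K3.U ⊓ f x) ⊔ g x)) = (K3.U ⊓ ⨅ x, (f x ⊔ g x)) ⊔ (⨅ x, g x) :=
  iInf_inf_sup_eq K3.U f g
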